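/- Let x, y, x', y', u, v : List α, let C : ℕ, and let I ⊆ ℕ be an infinite set. If levenshtein (x ++ u^k ++ y) (x' ++ v^k ++ y') ≤ C for every k ∈ I, then u and v have equal length, i.e., u.length = v.length. -/

import Mathlib

/-- `wpow u k` is the k-fold concatenation `u ++ u ++ ⋯ ++ u` (k copies). -/
def wpow {α : Type*} (u : List α) (k : ℕ) : List α := (List.replicate k u).flatten

namespace Levenshtein

/-- A cost structure for Levenshtein edit distance (as in Mathlib, Dec 2024). -/
structure Cost (α β δ : Type*) where
  delete : α → δ
  insert : β → δ
  substitute : α → β → δ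

/-- The default cost structure: each insertion, deletion and substitution costs 1. -/
def defaultCost {α : Type*} [DecidableEq α] : Cost α α ℕ where
  delete _ := 1
  insert _ := 1
  substitute a b := if a = b then 0 else 1

/-- Inner loop of the Levenshtein dynamic programme (as in Mathlib, Dec 2024). -/
def impl {α β δ : Type*} [AddZeroClass δ] [Min δ] (C : Cost α β δ) (xs : List α) (y : β)
    (d : {r : List δ // 0 < r.length}) : {r : List δ // 0 < r.length} :=
  let ⟨ds, w⟩ := d
  xs.zip (ds.zip ds.tail) |>.foldr
    (init := ⟨[C.insert y + ds.getLast (List.ne_nil_of_length_pos w)], by simp⟩)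
    (fun ⟨x, d₀, d₁⟩ ⟨r, w⟩ =>
      ⟨min (C.delete x + r[0]) (min (C.insert y + d₀) (C.substitute x y + d₁)) :: r, by simp⟩)

end Levenshtein

open Levenshtein in
/-- Levenshtein distances of all suffixes of `xs` to `ys` (as in Mathlib, Dec 2024). -/
def suffixLevenshtein {α β δ : Type*} [AddZeroClass δ] [Min δ] (C : Cost α β δ)
    (xs : List α) (ys : List β) : {r : List δ // 0 < r.length} :=
  ys.foldr
    (impl C xs)
    (xs.foldr (init := ⟨[0], by simp⟩) (fun a ⟨r, w⟩ => ⟨(C.delete a + r[0]) :: r, by simp⟩))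

open Levenshtein in
/-- Levenshtein edit distance with cost structure `C` (as in Mathlib, Dec 2024). -/
def levenshtein {α β δ : Type*} [AddZeroClass δ] [Min δ] (C : Cost α β δ)
    (xs : List α) (ys : List β) : δ :=
  let ⟨r, _⟩ := suffixLevenshtein C xs ys
  r[0]

/-!
Every deletion shortens a word by one letter and every insertion lengthens it by one, so the
edit distance of two words is at least the difference of their lengths. If `|u| ≠ |v|`, the
lengths of `x ++ u^k ++ y` and `x' ++ v^k ++ y'` drift apart linearly in `k`, which no bound
`C` can absorb for infinitely many `k`.
-/

namespace Levenshtein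

variable {α β δ : Type*} [AddZeroClass δ] [Min δ] (C : Cost α β δ)

theorem impl_cons {x : α} {xs : List α} {y : β} {d : δ} {ds : List δ} {w}
    (w' : 0 < ds.length) :
    impl C (x :: xs) y ⟨d :: ds, w⟩ =
      let ⟨r, w⟩ := impl C xs y ⟨ds, w'⟩
      ⟨min (C.delete x + r[0]) (min (C.insert y + d) (C.substitute x y + ds[0])) :: r,
        by simp⟩ :=
  match ds, w' with | _ :: _, _ => rfl

theorem impl_length {xs : List α} {y : β} (d : {r : List δ // 0 < r.length})
    (w : d.1.length = xs.length + 1) :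
    (impl C xs y d).1.length = xs.length + 1 := by
  induction xs generalizing d with
  | nil => rfl
  | cons x xs ih =>
    match d, w with
    | ⟨d₁ :: d₂ :: ds, _⟩, w =>
      dsimp [impl]
      congr 1
      exact ih ⟨d₂ :: ds, by simp⟩ (by simpa using w)

end Levenshtein

open Levenshtein

section Recursion

variable {α β δ : Type*} [AddZeroClass δ] [Min δ] (C : Cost α β δ)

theorem suffixLevenshtein_length (xs : List α) (ys : List β) :
    (suffixLevenshtein C xs ys).1.length = xs.length + 1 := by
  induction ys with
  | nil =>
    induction xs with
    | nil => rfl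
    | cons _ xs ih => simp_all [suffixLevenshtein]
  | cons y ys ih => exact impl_length C _ ih

theorem suffixLevenshtein_cons₁ (x : α) (xs : List α) (ys : List β) :
    suffixLevenshtein C (x :: xs) ys =
      ⟨levenshtein C (x :: xs) ys :: (suffixLevenshtein C xs ys).1, by simp⟩ := by
  induction ys with
  | nil => rfl
  | cons y ys ih =>
    have htail : (suffixLevenshtein C (x :: xs) (y :: ys)).1.tail =
        (suffixLevenshtein C xs (y :: ys)).1 := by
      change (impl C (x :: xs) y (suffixLevenshtein C (x :: xs) ys)).1.tail = _
      rw [ih, impl_cons C (by simp [suffixLevenshtein_length])]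
      rfl
    rcases hs : suffixLevenshtein C (x :: xs) (y :: ys) with ⟨_ | ⟨r₀, r⟩, hr⟩
    · simp at hr
    have hhead : levenshtein C (x :: xs) (y :: ys) = r₀ := by
      unfold levenshtein
      rw [hs]
      rfl
    rw [hs] at htail
    simp only [hhead, ← htail, List.tail_cons]

theorem levenshtein_nil_cons (y : β) (ys : List β) :
    levenshtein C ([] : List α) (y :: ys) = C.insert y + levenshtein C [] ys := by
  rcases hs : suffixLevenshtein C ([] : List α) ys with ⟨_ | ⟨r₀, _ | _⟩, hr⟩
  · simp at hr
  · change C.insert y + (suffixLevenshtein C ([] : List α) ys).1.getLast _ = _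
    simp [hs, levenshtein]
  · simpa [hs] using suffixLevenshtein_length C ([] : List α) ys

theorem levenshtein_cons_nil (x : α) (xs : List α) :
    levenshtein C (x :: xs) ([] : List β) = C.delete x + levenshtein C xs [] := rfl

theorem levenshtein_cons_cons (x : α) (xs : List α) (y : β) (ys : List β) :
    levenshtein C (x :: xs) (y :: ys) =
      min (C.delete x + levenshtein C xs (y :: ys))
        (min (C.insert y + levenshtein C (x :: xs) ys)
          (C.substitute x y + levenshtein C xs ys)) := by
  change (impl C (x :: xs) y (suffixLevenshtein C (x :: xs) ys)).1[0]'
    (by rw [impl_length C _ (suffixLevenshtein_length C _ _)]; simp) = _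
  simp only [suffixLevenshtein_cons₁, impl_cons C (suffixLevenshtein C xs ys).2]
  rfl

end Recursion

section LengthBounds

variable {α β : Type*} (C : Cost α β ℕ)

theorem length_left_le_levenshtein_add (hC : ∀ a, 1 ≤ C.delete a) (xs : List α)
    (ys : List β) : xs.length ≤ levenshtein C xs ys + ys.length := by
  induction xs generalizing ys with
  | nil => simp
  | cons x xs ih =>
    induction ys with
    | nil =>
      have := hC x
      have := ih []
      simp only [levenshtein_cons_nil, List.length_cons, List.length_nil] at *
      omega
    | cons y ys ihy =>
      have := hC x
      have := ih (y :: ys)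
      have := ih ys
      simp only [levenshtein_cons_cons, List.length_cons] at *
      omega

theorem length_right_le_levenshtein_add (hC : ∀ b, 1 ≤ C.insert b) (xs : List α)
    (ys : List β) : ys.length ≤ levenshtein C xs ys + xs.length := by
  induction xs generalizing ys with
  | nil =>
    induction ys with
    | nil => simp
    | cons y ys ihy =>
      have := hC y
      simp only [levenshtein_nil_cons, List.length_cons, List.length_nil] at *
      omega
  | cons x xs ih =>
    induction ys with
    | nil => simp
    | cons y ys ihy =>
      have := hC y
      have := ih (y :: ys)
      have := ih ys
      simp only [levenshtein_cons_cons, List.length_cons] at *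
      omega

end LengthBounds

theorem wpow_length {α : Type*} (u : List α) (k : ℕ) : (wpow u k).length = k * u.length := by
  simp [wpow]

theorem Nat.le_of_mul_le_mul_add_of_infinite {a b c : ℕ} {I : Set ℕ} (hI : I.Infinite)
    (h : ∀ k ∈ I, k * a ≤ k * b + c) : a ≤ b := by
  by_contra! hba
  obtain ⟨k, hkI, hck⟩ := hI.exists_gt c
  have : k * (b + 1) ≤ k * a := Nat.mul_le_mul_left k hba
  have := h k hkI
  nlinarith

theorem stmt_2 {α : Type*} [DecidableEq α] (x y x' y' u v : List α) (C : ℕ) (I : Set ℕ)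
    (hI : I.Infinite)
    (h : ∀ k ∈ I,
      levenshtein Levenshtein.defaultCost (x ++ wpow u k ++ y) (x' ++ wpow v k ++ y') ≤ C) :
    u.length = v.length := by
  have hdel : ∀ a : α, 1 ≤ (defaultCost : Cost α α ℕ).delete a := fun _ => le_rfl
  have hins : ∀ a : α, 1 ≤ (defaultCost : Cost α α ℕ).insert a := fun _ => le_rfl
  apply le_antisymm
  · refine Nat.le_of_mul_le_mul_add_of_infinite (c := C + x'.length + y'.length) hI fun k hk => ?_
    have := length_left_le_levenshtein_add _ hdel (x ++ wpow u k ++ y) (x' ++ wpow v k ++ y')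
    simp only [List.length_append, wpow_length] at this
    have := h k hk
    omega
  · refine Nat.le_of_mul_le_mul_add_of_infinite (c := C + x.length + y.length) hI fun k hk => ?_
    have := length_right_le_levenshtein_add _ hins (x ++ wpow u k ++ y) (x' ++ wpow v k ++ y')
    simp only [List.length_append, wpow_length] at this
    have := h k hk
    omega
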